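/- Hypergeometric representation of the Bernstein coefficients: let 2 ≤ ℓ ≤ m and p = (p_0,…,p_ℓ) ∈ ℝ^{ℓ+1}. Then for all x ∈ ℝ, ∑_{j=0}^{ℓ} (p_j − j/ℓ) b_{j,ℓ}(x) = ∑_{i=0}^{m} ( E[p_{K_i}] − i/m ) b_{i,m}(x), where K_i ~ Hypergeometric(m, ℓ, i), i.e. P(K_i = j) = C(ℓ,j)C(m−ℓ,i−j)/C(m,i). -/

import Mathlib

/-! Degree elevation from `ℓ` to `m` expands `b_{j,ℓ}` in the basis `b_{i,m}` with coefficients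
`P(K_i = j)`, `K_i ~ Hypergeometric(m, ℓ, i)`: multiply `b_{j,ℓ}` by `1 = ∑ₖ b_{k,m-ℓ}` and use
`b_{j,ℓ} b_{k,m-ℓ} = C(ℓ,j) C(m-ℓ,k) / C(m,j+k) · b_{j+k,m}`. Substituting this into
`∑ⱼ pⱼ b_{j,ℓ}` moves the coefficients `pⱼ` to `E[p_{K_i}]`, while the correction terms
`j/ℓ` and `i/m` both contribute `x`, by the linear precision `∑ₖ (k/n) b_{k,n}(x) = x`. -/

/-- The Bernstein basis polynomial. -/
noncomputable def bern (n i : ℕ) (x : ℝ) : ℝ := (n.choose i : ℝ) * x^i * (1-x)^(n-i)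

open Finset

/-- `P(K_i = j)` for `K_i ~ Hypergeometric(m, ℓ, i)`. -/
noncomputable def hypergeomProb (m ℓ i j : ℕ) : ℝ :=
  if j ≤ i then (ℓ.choose j : ℝ) * ((m-ℓ).choose (i-j) : ℝ) / (m.choose i : ℝ) else 0

lemma bern_eq_eval_bernsteinPolynomial (n i : ℕ) (x : ℝ) :
    bern n i x = (bernsteinPolynomial ℝ n i).eval x := by
  simp [bern, bernsteinPolynomial]

lemma sum_bern (n : ℕ) (x : ℝ) : ∑ k ∈ range (n+1), bern n k x = 1 := by
  simpa [bern_eq_eval_bernsteinPolynomial, Polynomial.eval_finsetSum]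
    using congrArg (Polynomial.eval x) (bernsteinPolynomial.sum ℝ n)

lemma sum_natCast_mul_bern (n : ℕ) (x : ℝ) :
    ∑ k ∈ range (n+1), (k : ℝ) * bern n k x = n * x := by
  simpa [bern_eq_eval_bernsteinPolynomial, Polynomial.eval_finsetSum]
    using congrArg (Polynomial.eval x) (bernsteinPolynomial.sum_smul ℝ n)

lemma sum_sub_div_mul_bern {n : ℕ} (hn : n ≠ 0) (c : ℕ → ℝ) (x : ℝ) :
    ∑ k ∈ range (n+1), (c k - k / n) * bern n k x = ∑ k ∈ range (n+1), c k * bern n k x - x := by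
  have hlin : ∑ k ∈ range (n+1), (k / n : ℝ) * bern n k x = x := by
    simp_rw [div_mul_eq_mul_div, ← sum_div, sum_natCast_mul_bern]
    field_simp
  simp_rw [sub_mul, sum_sub_distrib, hlin]

lemma bern_mul_bern {ℓ n j k : ℕ} (hj : j ≤ ℓ) (hk : k ≤ n) (x : ℝ) :
    bern ℓ j x * bern n k x =
      ℓ.choose j * n.choose k * x^(j+k) * (1-x)^(ℓ+n-(j+k)) := by
  rw [show ℓ + n - (j+k) = (ℓ - j) + (n - k) by omega, bern, bern]
  ring

lemma hypergeomProb_mul_bern {m ℓ i j : ℕ} (hi : i ≤ m) (x : ℝ) :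
    hypergeomProb m ℓ i j * bern m i x =
      if j ≤ i then ℓ.choose j * (m-ℓ).choose (i-j) * x^i * (1-x)^(m-i) else 0 := by
  have hc : (m.choose i : ℝ) ≠ 0 := by exact_mod_cast (Nat.choose_pos hi).ne'
  unfold hypergeomProb bern
  split_ifs
  · field_simp
  · simp

lemma sum_hypergeomProb_mul_bern {m ℓ j : ℕ} (hm : ℓ ≤ m) (hj : j ≤ ℓ) (x : ℝ) :
    ∑ i ∈ range (m+1), hypergeomProb m ℓ i j * bern m i x = bern ℓ j x := by
  obtain ⟨n, rfl⟩ := Nat.exists_eq_add_of_le hm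
  have hfilter : (range (ℓ+n+1)).filter (j ≤ ·) = Ico j (ℓ+n+1) := by
    ext i; simp [and_comm]
  have hrange : range (n+1) ⊆ range (ℓ+n+1-j) := range_subset_range.mpr (by omega)
  calc ∑ i ∈ range (ℓ+n+1), hypergeomProb (ℓ+n) ℓ i j * bern (ℓ+n) i x
      = ∑ i ∈ Ico j (ℓ+n+1), ℓ.choose j * n.choose (i-j) * x^i * (1-x)^(ℓ+n-i) := by
        rw [sum_congr rfl fun i hi => hypergeomProb_mul_bern (by simpa [Nat.lt_succ_iff] using hi) x,
          ← sum_filter, hfilter, Nat.add_sub_cancel_left]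
    _ = ∑ k ∈ range (n+1), ℓ.choose j * n.choose k * x^(j+k) * (1-x)^(ℓ+n-(j+k)) := by
        rw [sum_Ico_eq_sum_range, ← sum_subset hrange]
        · simp only [Nat.add_sub_cancel_left]
        · intro k _ hk
          rw [Nat.add_sub_cancel_left, Nat.choose_eq_zero_of_lt (n := n) (by simpa using hk)]
          simp
    _ = bern ℓ j x * ∑ k ∈ range (n+1), bern n k x := by
        rw [mul_sum]
        exact sum_congr rfl fun k hk => (bern_mul_bern hj (by simpa [Nat.lt_succ_iff] using hk) x).symm
    _ = bern ℓ j x := by rw [sum_bern, mul_one]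

/-- Hypergeometric representation of the Bernstein coefficients: the inner sum is
`E[p_{K_i}]` for `K_i ~ Hypergeometric(m, ℓ, i)`. -/
theorem hypergeometric_bernstein_coefficients (m ℓ : ℕ) (hℓ : 2 ≤ ℓ) (hm : ℓ ≤ m)
    (p : ℕ → ℝ) (x : ℝ) :
    ∑ j ∈ Finset.range (ℓ+1), (p j - (j : ℝ)/(ℓ : ℝ)) * bern ℓ j x =
      ∑ i ∈ Finset.range (m+1),
        ((∑ j ∈ Finset.range (ℓ+1),
            (if j ≤ i then (ℓ.choose j : ℝ) * ((m-ℓ).choose (i-j) : ℝ) / (m.choose i : ℝ)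
              else 0) * p j) - (i : ℝ)/(m : ℝ)) * bern m i x := by
  change _ = ∑ i ∈ range (m+1),
    ((∑ j ∈ range (ℓ+1), hypergeomProb m ℓ i j * p j) - (i : ℝ)/(m : ℝ)) * bern m i x
  rw [sum_sub_div_mul_bern (by omega), sum_sub_div_mul_bern (by omega)]
  congr 1
  simp_rw [sum_mul, mul_right_comm _ (p _)]
  rw [sum_comm]
  refine sum_congr rfl fun j hj => ?_
  rw [← sum_mul, sum_hypergeomProb_mul_bern hm (by simpa [Nat.lt_succ_iff] using hj), mul_comm]
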